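/- Fix r > 0 and for δ > 0 set d(δ) := 2·arsinh(2·sinh(r/2)·√(1 + (sinh(r/2)/cosh δ)²)). Then the quotient (2r − d(δ))/δ² tends, as δ tends to 0 from the right, to the positive limit 2·sinh(r/2)³ / (cosh(r/2)·cosh(r)). -/

import Mathlib

/-! With `s = sinh (r/2)` and `F u = 2 arsinh (2 s √(1 + (s/u)²))` we have `d δ = F (cosh δ)` and
`F 1 = 2r`, because `2 s √(1 + s²) = 2 sinh (r/2) cosh (r/2) = sinh r`. Hence
`(2r - d δ)/δ² = -((F (cosh δ) - F 1)/(cosh δ - 1)) · ((cosh δ - 1)/δ²) → -F'(1) · 1/2`,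
and the chain rule gives `F'(1) = -4 s³/(cosh (r/2) · cosh r)`. -/

open Real Filter Topology

theorem HasDerivAt.tendsto_comp_sub_div {α : Type*} {l : Filter α} {h : ℝ → ℝ} {φ ψ : α → ℝ}
    {D a L : ℝ} (hh : HasDerivAt h D a) (hφ : Tendsto φ l (𝓝[≠] a))
    (hψ : Tendsto (fun x => (φ x - a) / ψ x) l (𝓝 L)) :
    Tendsto (fun x => (h (φ x) - h a) / ψ x) l (𝓝 (D * L)) := by
  refine ((hasDerivAt_iff_tendsto_slope.1 hh).comp hφ |>.mul hψ).congr' ?_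
  filter_upwards [hφ.eventually self_mem_nhdsWithin] with x hx
  have hx : φ x - a ≠ 0 := sub_ne_zero.2 hx
  simp only [Function.comp_apply, slope_def_field]
  field_simp

namespace Real

theorem tendsto_sinh_div_self : Tendsto (fun x => sinh x / x) (𝓝[≠] 0) (𝓝 1) := by
  have h := hasDerivAt_iff_tendsto_slope.1 (hasDerivAt_sinh 0)
  rw [cosh_zero] at h
  exact h.congr fun x => by simp [slope_def_field]

theorem cosh_sub_one_eq_two_mul_sinh_half_sq (x : ℝ) : cosh x - 1 = 2 * sinh (x / 2) ^ 2 := by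
  conv_lhs => rw [← mul_div_cancel₀ x two_ne_zero, cosh_two_mul, cosh_sq]
  ring

theorem tendsto_cosh_sub_one_div_sq :
    Tendsto (fun x => (cosh x - 1) / x ^ 2) (𝓝[≠] 0) (𝓝 (1 / 2)) := by
  have hhalf : Tendsto (fun x : ℝ => x / 2) (𝓝[≠] 0) (𝓝[≠] 0) :=
    tendsto_nhdsWithin_of_tendsto_nhds_of_eventually_within _
      (by simpa using ((tendsto_id (x := 𝓝 (0 : ℝ))).div_const 2).mono_left nhdsWithin_le_nhds)
      (eventually_nhdsWithin_of_forall fun x hx => by simpa using hx)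
  have h := ((tendsto_sinh_div_self.comp hhalf).pow 2).div_const 2
  rw [one_pow] at h
  refine h.congr' (eventually_nhdsWithin_of_forall fun x hx => ?_)
  have hx : x ≠ 0 := hx
  simp only [Function.comp_apply, cosh_sub_one_eq_two_mul_sinh_half_sq]
  field_simp

theorem tendsto_cosh_nhdsNE_zero : Tendsto cosh (𝓝[≠] 0) (𝓝[≠] 1) :=
  tendsto_nhdsWithin_of_tendsto_nhds_of_eventually_within _
    (by simpa using continuous_cosh.continuousWithinAt.tendsto (s := {0}ᶜ) (x := 0))
    (eventually_nhdsWithin_of_forall fun x hx => (one_lt_cosh.2 hx).ne')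

theorem sqrt_one_add_sinh_sq (t : ℝ) : √(1 + sinh t ^ 2) = cosh t := by
  rw [← cosh_arsinh, arsinh_sinh]

theorem two_mul_sinh_mul_sqrt_one_add_sinh_sq (t : ℝ) :
    2 * sinh t * √(1 + sinh t ^ 2) = sinh (2 * t) := by
  rw [sqrt_one_add_sinh_sq, sinh_two_mul, mul_assoc]

theorem hasDerivAt_arsinh_two_mul_sinh_mul_sqrt (t : ℝ) :
    HasDerivAt (fun u => arsinh (2 * sinh t * √(1 + (sinh t / u) ^ 2)))
      (-2 * sinh t ^ 3 / (cosh t * cosh (2 * t))) 1 := by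
  have hq : HasDerivAt (fun u : ℝ => 1 + (sinh t / u) ^ 2) (-2 * sinh t ^ 2) 1 := by
    have h := (((hasDerivAt_inv one_ne_zero).const_mul (sinh t)).fun_pow 2).const_add 1
    simp only [div_eq_mul_inv]
    exact h.congr_deriv (by norm_num; ring)
  have h := ((hq.sqrt (by positivity)).const_mul (2 * sinh t)).arsinh
  convert h using 1
  rw [div_one, two_mul_sinh_mul_sqrt_one_add_sinh_sq, sqrt_one_add_sinh_sq, sqrt_one_add_sinh_sq,
    smul_eq_mul]
  have := cosh_pos t
  field_simp

end Real

/-- Fix `r > 0` and for `δ > 0` set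
`d δ := 2 arsinh (2 sinh (r/2) √(1 + (sinh (r/2)/cosh δ)²))`.
Then `(2r - d δ)/δ²` tends, as `δ → 0⁺`, to the positive limit
`2 sinh (r/2)³ / (cosh (r/2) · cosh r)`. -/
theorem stmt6 (r : ℝ) (hr : 0 < r) :
    Filter.Tendsto
      (fun δ : ℝ =>
        (2 * r - 2 * Real.arsinh
            (2 * Real.sinh (r / 2) *
              Real.sqrt (1 + (Real.sinh (r / 2) / Real.cosh δ) ^ 2))) / δ ^ 2)
      (nhdsWithin 0 (Set.Ioi 0))
      (nhds (2 * Real.sinh (r / 2) ^ 3 / (Real.cosh (r / 2) * Real.cosh r))) ∧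
    0 < 2 * Real.sinh (r / 2) ^ 3 / (Real.cosh (r / 2) * Real.cosh r) := by
  have hs : 0 < sinh (r / 2) := sinh_pos_iff.2 (half_pos hr)
  refine ⟨?_, by positivity⟩
  have hr2 : 2 * (r / 2) = r := mul_div_cancel₀ r two_ne_zero
  have hd := hasDerivAt_arsinh_two_mul_sinh_mul_sqrt (r / 2)
  have hlim := ((hd.const_mul 2).tendsto_comp_sub_div tendsto_cosh_nhdsNE_zero
    tendsto_cosh_sub_one_div_sq).neg.mono_left (nhdsGT_le_nhdsNE 0)
  rw [div_one, two_mul_sinh_mul_sqrt_one_add_sinh_sq, arsinh_sinh, hr2] at hlim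
  convert hlim using 2 with δ
  · ring
  · ring
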